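/- Let M ≥ 0 be an n×n operator matrix and K, J ⊆ {0,…,n-1} with N = K ∪ J. Then S(M;N) = S(M;K) + S(M;J) - S(M;K∩J) if and only if the (k,j) entries of S(M;N) vanish for all pairs (k,j) ∈ (N×N) \ ((K×K) ∪ (J×J)). -/

import Mathlib

/-!
If the entries of `S(M;K∪J)` outside `(K×K) ∪ (J×J)` vanish, every row of `S(M;K∪J)` indexed
outside `J` is supported in `K`. Compressing `S(M;K∪J)` to rank one along such a row gives a
competitor for `S(M;K)` that agrees with `S(M;K∪J)` on the diagonal, so the positive semidefinite
difference `S(M;K∪J) - S(M;K)` is supported on `J×J`; symmetrically `S(M;K∪J) - S(M;J)` is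
supported on `K×K`. Hence `S(M;K) + S(M;J) - S(M;K∪J)` is supported on `(K∩J)×(K∩J)` and lies
below `M`, and by maximality of `S(M;J)` it lies above `S(M;K∩J)`; maximality of `S(M;K∩J)`
forces equality.
-/

open scoped ComplexOrder

/-- `S` is the Schur complement of the positive semidefinite matrix `M` supported on the
rows and columns in `Λ`, padded with zeros. -/
def IsSchurCompl {n : ℕ} (M : Matrix (Fin n) (Fin n) ℂ) (Λ : Set (Fin n))
    (S : Matrix (Fin n) (Fin n) ℂ) : Prop :=
  S.PosSemidef ∧ (∀ i j, i ∉ Λ ∨ j ∉ Λ → S i j = 0) ∧ (M - S).PosSemidef ∧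
    ∀ X : Matrix (Fin n) (Fin n) ℂ, X.PosSemidef → (∀ i j, i ∉ Λ ∨ j ∉ Λ → X i j = 0) →
      (M - X).PosSemidef → (S - X).PosSemidef

open scoped MatrixOrder

namespace Matrix

section SupportedOn

variable {ι α : Type*}

def SupportedOn [Zero α] (X : Matrix ι ι α) (Λ : Set ι) : Prop :=
  ∀ i j, i ∉ Λ ∨ j ∉ Λ → X i j = 0

variable {X Y : Matrix ι ι α} {Λ Λ' K J : Set ι}

lemma SupportedOn.mono [Zero α] (hX : X.SupportedOn Λ) (h : Λ ⊆ Λ') : X.SupportedOn Λ' :=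
  fun i j hij => hX i j (hij.imp (mt (h ·)) (mt (h ·)))

lemma SupportedOn.inter [Zero α] (hK : X.SupportedOn K) (hJ : X.SupportedOn J) :
    X.SupportedOn (K ∩ J) := by
  intro i j hij
  simp only [Set.mem_inter_iff] at hij
  by_cases hK' : i ∈ K ∧ j ∈ K
  · exact hJ i j (by tauto)
  · exact hK i j (not_and_or.1 hK')

lemma SupportedOn.sub [AddGroup α] (hX : X.SupportedOn Λ) (hY : Y.SupportedOn Λ) :
    (X - Y).SupportedOn Λ :=
  fun i j hij => by rw [sub_apply, hX i j hij, hY i j hij, sub_zero]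

lemma SupportedOn.add [AddZeroClass α] (hX : X.SupportedOn Λ) (hY : Y.SupportedOn Λ) :
    (X + Y).SupportedOn Λ :=
  fun i j hij => by rw [add_apply, hX i j hij, hY i j hij, add_zero]

lemma IsHermitian.supportedOn_of_row_eq_zero [AddMonoid α] [StarAddMonoid α] (hX : X.IsHermitian)
    (hrow : ∀ i ∉ Λ, ∀ j, X i j = 0) : X.SupportedOn Λ := by
  rintro i j (hi | hj)
  · exact hrow i hi j
  · rw [← hX.apply, hrow j hj i, star_zero]

end SupportedOn

variable {ι 𝕜 : Type*} [Fintype ι] [RCLike 𝕜]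

lemma PosSemidef.apply_eq_zero_of_diag_eq_zero {A : Matrix ι ι 𝕜}
    (hA : A.PosSemidef) {i : ι} (hi : A i i = 0) (j : ι) : A i j = 0 := by
  classical
  have hcol : A *ᵥ Pi.single i 1 = 0 := by
    rw [← hA.dotProduct_mulVec_zero_iff, mulVec_single_one, ← Pi.single_star, star_one,
      single_one_dotProduct]
    exact hi
  rw [← hA.1.apply i j, show A j i = 0 by simpa using congrFun hcol j, star_zero]

lemma IsHermitian.star_mulVec_dotProduct {T : Matrix ι ι 𝕜} (hT : T.IsHermitian) (u x : ι → 𝕜) :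
    star (T *ᵥ u) ⬝ᵥ x = star u ⬝ᵥ T *ᵥ x := by
  rw [star_mulVec, hT.eq, dotProduct_mulVec]

lemma IsHermitian.star_dotProduct_mulVec {T : Matrix ι ι 𝕜} (hT : T.IsHermitian) (x u : ι → 𝕜) :
    star x ⬝ᵥ T *ᵥ u = star (star u ⬝ᵥ T *ᵥ x) := by
  rw [star_dotProduct, hT.star_mulVec_dotProduct]

variable (T : Matrix ι ι 𝕜) (u : ι → 𝕜)

-- When `u⋆Tu = 0` this is `0`, since `0⁻¹ = 0`.
noncomputable def rankOneCompression : Matrix ι ι 𝕜 :=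
  (star u ⬝ᵥ T *ᵥ u)⁻¹ • vecMulVec (T *ᵥ u) (star (T *ᵥ u))

variable {T}

lemma star_dotProduct_rankOneCompression_mulVec (hT : T.IsHermitian) (x : ι → 𝕜) :
    star x ⬝ᵥ T.rankOneCompression u *ᵥ x =
      (star u ⬝ᵥ T *ᵥ u)⁻¹ * (star (star u ⬝ᵥ T *ᵥ x) * (star u ⬝ᵥ T *ᵥ x)) := by
  rw [rankOneCompression, smul_mulVec, dotProduct_smul, vecMulVec_mulVec, dotProduct_smul,
    hT.star_mulVec_dotProduct, op_smul_eq_mul, smul_eq_mul,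
    hT.star_dotProduct_mulVec x u]

lemma PosSemidef.rankOneCompression_nonneg (hT : T.PosSemidef) : 0 ≤ T.rankOneCompression u :=
  ((posSemidef_vecMulVec_self_star _).smul (inv_nonneg.2 (hT.dotProduct_mulVec_nonneg u))).nonneg

lemma PosSemidef.rankOneCompression_le (hT : T.PosSemidef) : T.rankOneCompression u ≤ T := by
  set c := star u ⬝ᵥ T *ᵥ u with hc_def
  by_cases hc : c = 0
  · simpa [rankOneCompression, ← hc_def, hc] using hT.nonneg
  refine .of_dotProduct_mulVec_nonneg
    (hT.1.sub (nonneg_iff_posSemidef.1 (hT.rankOneCompression_nonneg u)).1) fun x => ?_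
  set s := star u ⬝ᵥ T *ᵥ x with hs_def
  have hcs : star c = c := (hT.1.star_dotProduct_mulVec u u).symm
  -- completing the square: the form equals `y⋆Ty` with `y = x - (s / c) u`
  have key : star x ⬝ᵥ (T - T.rankOneCompression u) *ᵥ x
      = star (x - (s / c) • u) ⬝ᵥ T *ᵥ (x - (s / c) • u) := by
    rw [sub_mulVec, dotProduct_sub, star_dotProduct_rankOneCompression_mulVec u hT.1, mulVec_sub,
      mulVec_smul, star_sub, star_smul, sub_dotProduct, dotProduct_sub, dotProduct_sub,
      smul_dotProduct, smul_dotProduct, dotProduct_smul, dotProduct_smul,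
      hT.1.star_dotProduct_mulVec x u, ← hs_def, ← hc_def]
    simp only [smul_eq_mul, star_div₀, hcs]
    field_simp
    ring
  rw [key]
  exact hT.dotProduct_mulVec_nonneg _

lemma rankOneCompression_single_apply [DecidableEq ι] (i p q : ι) :
    T.rankOneCompression (Pi.single i 1) p q = (T i i)⁻¹ * (T p i * star (T q i)) := by
  simp [rankOneCompression, vecMulVec_apply]

end Matrix

open Matrix

namespace IsSchurCompl

variable {n : ℕ} {M S T X : Matrix (Fin n) (Fin n) ℂ} {Λ : Set (Fin n)}

lemma nonneg (hS : IsSchurCompl M Λ S) : 0 ≤ S := hS.1.nonneg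

lemma supportedOn (hS : IsSchurCompl M Λ S) : S.SupportedOn Λ := hS.2.1

lemma le (hS : IsSchurCompl M Λ S) : S ≤ M := hS.2.2.1

lemma le_of_supportedOn (hS : IsSchurCompl M Λ S) (hX : 0 ≤ X) (hXΛ : X.SupportedOn Λ)
    (hXM : X ≤ M) : X ≤ S :=
  hS.2.2.2 X (nonneg_iff_posSemidef.1 hX) hXΛ hXM

lemma mono {Λ' : Set (Fin n)} {S' : Matrix (Fin n) (Fin n) ℂ} (hS : IsSchurCompl M Λ S)
    (hS' : IsSchurCompl M Λ' S') (h : Λ ⊆ Λ') : S ≤ S' :=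
  hS'.le_of_supportedOn hS.nonneg (hS.supportedOn.mono h) hS.le

lemma sub_apply_eq_zero_of_row (hS : IsSchurCompl M Λ S) (hT : 0 ≤ T) (hTM : T ≤ M) (hST : S ≤ T)
    {i : Fin n} (hrow : ∀ l ∉ Λ, T i l = 0) (j : Fin n) : (T - S) i j = 0 := by
  have hT' := nonneg_iff_posSemidef.1 hT
  -- The compression of `T` along column `i` competes with `S` and agrees with `T` at `(i, i)`.
  set R := T.rankOneCompression (Pi.single i 1)
  have hcol : ∀ p ∉ Λ, T p i = 0 := fun p hp => by rw [← hT'.1.apply, hrow p hp, star_zero]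
  have hR : R.SupportedOn Λ := by
    rintro p q (hp | hq) <;> simp [R, rankOneCompression_single_apply, hcol _ ‹_›]
  have hRS : R ≤ S := hS.le_of_supportedOn (hT'.rankOneCompression_nonneg _) hR
    ((hT'.rankOneCompression_le _).trans hTM)
  have hRii : R i i = T i i := by
    have hii : star (T i i) = T i i := hT'.1.apply i i
    by_cases h0 : T i i = 0 <;> simp [R, rankOneCompression_single_apply, hii, h0]
  have hSii : T i i ≤ S i i := by
    simpa [hRii, sub_nonneg] using (le_iff.1 hRS).diag_nonneg (i := i)
  refine (le_iff.1 hST).apply_eq_zero_of_diag_eq_zero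
    (le_antisymm ?_ (le_iff.1 hST).diag_nonneg) j
  simpa [sub_nonpos] using hSii

lemma sub_supportedOn {J : Set (Fin n)} (hS : IsSchurCompl M Λ S) (hT : 0 ≤ T) (hTM : T ≤ M)
    (hST : S ≤ T) (hrow : ∀ i ∉ J, ∀ l ∉ Λ, T i l = 0) : (T - S).SupportedOn J :=
  (le_iff.1 hST).1.supportedOn_of_row_eq_zero fun i hi =>
    hS.sub_apply_eq_zero_of_row hT hTM hST (hrow i hi)

lemma inter_eq_add_sub {K J : Set (Fin n)} {SN SK SJ SI : Matrix (Fin n) (Fin n) ℂ}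
    (hSN : IsSchurCompl M (K ∪ J) SN) (hSK : IsSchurCompl M K SK) (hSJ : IsSchurCompl M J SJ)
    (hSI : IsSchurCompl M (K ∩ J) SI) (hD : (SN - SK).SupportedOn J)
    (hE : (SN - SJ).SupportedOn K) : SI = SK + SJ - SN := by
  have hKN := hSK.mono hSN Set.subset_union_left
  have hIK := hSI.mono hSK Set.inter_subset_left
  have hDI : SN - SK + SI ≤ SJ :=
    hSJ.le_of_supportedOn (add_nonneg (sub_nonneg.2 hKN) hSI.nonneg)
      (hD.add (hSI.supportedOn.mono Set.inter_subset_right))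
      (calc SN - SK + SI ≤ SN - SK + SK := add_le_add_right hIK _
        _ = SN := sub_add_cancel _ _
        _ ≤ M := hSN.le)
  have hIX : SI ≤ SK + SJ - SN := by
    rw [le_sub_iff_add_le]
    convert add_le_add_right hDI SK using 1
    abel
  have hXK : SK + SJ - SN = SK - (SN - SJ) := by abel
  have hXJ : SK + SJ - SN = SJ - (SN - SK) := by abel
  have hXI : SK + SJ - SN ≤ SI :=
    hSI.le_of_supportedOn (hSI.nonneg.trans hIX)
      ((hXK ▸ hSK.supportedOn.sub hE).inter (hXJ ▸ hSJ.supportedOn.sub hD))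
      (calc SK + SJ - SN = SJ - (SN - SK) := hXJ
        _ ≤ SJ := sub_le_self _ (sub_nonneg.2 hKN)
        _ ≤ M := hSJ.le)
  exact le_antisymm hIX hXI

end IsSchurCompl

theorem schur_sum_decomposition_iff_zero_entries {n : ℕ}
    (M : Matrix (Fin n) (Fin n) ℂ)
    (K J : Set (Fin n))
    (SN SK SJ SI : Matrix (Fin n) (Fin n) ℂ)
    (hSN : IsSchurCompl M (K ∪ J) SN)
    (hSK : IsSchurCompl M K SK)
    (hSJ : IsSchurCompl M J SJ)
    (hSI : IsSchurCompl M (K ∩ J) SI) :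
    SN = SK + SJ - SI ↔
      ∀ k j : Fin n, k ∈ K ∪ J → j ∈ K ∪ J →
        ¬(k ∈ K ∧ j ∈ K) → ¬(k ∈ J ∧ j ∈ J) → SN k j = 0 := by
  constructor
  · rintro rfl k j - - hK hJ
    rw [Matrix.sub_apply, Matrix.add_apply, hSK.supportedOn k j (not_and_or.1 hK),
      hSJ.supportedOn k j (not_and_or.1 hJ),
      (hSI.supportedOn.mono Set.inter_subset_left) k j (not_and_or.1 hK), add_zero, sub_zero]
  intro hz
  have hzero : ∀ i l, (i ∉ J ∧ l ∉ K) ∨ (i ∉ K ∧ l ∉ J) → SN i l = 0 := by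
    intro i l h
    by_cases hm : i ∈ K ∪ J ∧ l ∈ K ∪ J
    · exact hz i l hm.1 hm.2 (by tauto) (by tauto)
    · exact hSN.supportedOn i l (not_and_or.1 hm)
  have hD : (SN - SK).SupportedOn J :=
    hSK.sub_supportedOn hSN.nonneg hSN.le (hSK.mono hSN Set.subset_union_left)
      fun i hi l hl => hzero i l (.inl ⟨hi, hl⟩)
  have hE : (SN - SJ).SupportedOn K :=
    hSJ.sub_supportedOn hSN.nonneg hSN.le (hSJ.mono hSN Set.subset_union_right)
      fun i hi l hl => hzero i l (.inr ⟨hi, hl⟩)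
  rw [IsSchurCompl.inter_eq_add_sub hSN hSK hSJ hSI hD hE]
  abel
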